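/- arXiv:2303.00226 — 3 statements merged into one kernel-verified Lean document; each statement's English description precedes it below -/
import Mathlib

section
/- For every α, β, u₁, u₂, u₃ ∈ ZMod d, applying the generalized Pauli operator U_{α,β} to the first qudit, i.e. (U_{α,β} ⊗ I ⊗ I), sends the GHZ state Ψ_{u₁,u₂,u₃} to ω^{β·u₁} · Ψ_{u₁+α, u₂+β, u₃+β} (this is equation (11) of Theorem 1, with the global phase ω^{β·u₁} made explicit). -/
/-- ω = exp(2πi/d), the primitive d-th root of unity used throughout. -/
noncomputable def omega (d : ℕ) : ℂ := Complex.exp (2 * Real.pi * Complex.I / d)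

lemma omega_pow_d (d : ℕ) (hd : d ≠ 0) : omega d ^ d = 1 := by
  have hdc : (d : ℂ) ≠ 0 := Nat.cast_ne_zero.mpr hd
  rw [omega, ← Complex.exp_nat_mul]
  have h : (d : ℂ) * (2 * Real.pi * Complex.I / d) = 2 * Real.pi * Complex.I := by
    field_simp
  rw [h, Complex.exp_two_pi_mul_I]

lemma omega_pow_mod (d : ℕ) (hd : d ≠ 0) (n : ℕ) : omega d ^ n = omega d ^ (n % d) := by
  conv_lhs => rw [← Nat.div_add_mod n d]
  rw [pow_add, pow_mul, omega_pow_d d hd, one_pow, one_mul]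

lemma omega_pow_congr (d : ℕ) (hd : d ≠ 0) (m n : ℕ)
    (h : (m : ZMod d) = (n : ZMod d)) : omega d ^ m = omega d ^ n := by
  rw [omega_pow_mod d hd m, omega_pow_mod d hd n]
  rw [ZMod.natCast_eq_natCast_iff] at h
  exact congrArg _ h

/-- The generalized three-qudit GHZ state Ψ_{u₁,u₂,u₃}, modeled as a function
`(ZMod d) × (ZMod d) × (ZMod d) → ℂ`:
`Ψ(j₁,j₂,j₃) = (1/√d)·ω^{j₁·u₁}` if `j₂ = j₁ + u₂` and `j₃ = j₁ + u₃`, and `0` otherwise. -/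
noncomputable def GHZ3 (d : ℕ) (u₁ u₂ u₃ : ZMod d) :
    ZMod d × ZMod d × ZMod d → ℂ := fun p =>
  if p.2.1 = p.1 + u₂ ∧ p.2.2 = p.1 + u₃ then
    (1 / Real.sqrt d : ℂ) * omega d ^ (p.1 * u₁).val
  else 0

/-- The generalized Pauli operator `U_{α,β}` applied to the first qudit:
`f(j₁,j₂,j₃) ↦ ω^{j₁·α} f(j₁+β, j₂, j₃)`. -/
noncomputable def pauliFst (d : ℕ) (α β : ZMod d)
    (f : ZMod d × ZMod d × ZMod d → ℂ) : ZMod d × ZMod d × ZMod d → ℂ :=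
  fun p => omega d ^ (p.1 * α).val * f (p.1 + β, p.2.1, p.2.2)

/-- Equation (11) of Theorem 1, with the global phase `ω^{β·u₁}` made explicit:
`(U_{α,β} ⊗ I ⊗ I) Ψ_{u₁,u₂,u₃} = ω^{β·u₁} • Ψ_{u₁+α, u₂+β, u₃+β}`. -/
theorem pauliFst_GHZ3 (d : ℕ) (hd : 2 ≤ d) (α β u₁ u₂ u₃ : ZMod d) :
    pauliFst d α β (GHZ3 d u₁ u₂ u₃) =
      (omega d ^ (β * u₁).val) • GHZ3 d (u₁ + α) (u₂ + β) (u₃ + β) := by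
  have hd0 : d ≠ 0 := by omega
  haveI : NeZero d := ⟨hd0⟩
  funext p
  obtain ⟨j₁, j₂, j₃⟩ := p
  simp only [pauliFst, GHZ3, Pi.smul_apply, smul_eq_mul]
  have hcond : (j₂ = j₁ + β + u₂ ∧ j₃ = j₁ + β + u₃) ↔
      (j₂ = j₁ + (u₂ + β) ∧ j₃ = j₁ + (u₃ + β)) := by
    constructor <;> rintro ⟨h1, h2⟩ <;> subst h1 <;> subst h2 <;>
      exact ⟨by ring, by ring⟩
  rw [if_congr hcond rfl rfl]
  by_cases h : j₂ = j₁ + (u₂ + β) ∧ j₃ = j₁ + (u₃ + β)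
  · rw [if_pos h, if_pos h]
    have key : omega d ^ (j₁ * α).val * omega d ^ ((j₁ + β) * u₁).val =
        omega d ^ (β * u₁).val * omega d ^ (j₁ * (u₁ + α)).val := by
      rw [← pow_add, ← pow_add]
      apply omega_pow_congr d hd0
      push_cast [ZMod.natCast_val, ZMod.cast_id]
      ring
    linear_combination (1 / (Real.sqrt d : ℂ)) * key
  · rw [if_neg h, if_neg h, mul_zero, mul_zero]
end

section
/- For every α, β, u₁, u₂, u₃ ∈ ZMod d, applying the generalized Pauli operator U_{α,β} to the third qudit, i.e. (I ⊗ I ⊗ U_{α,β}), sends the GHZ state Ψ_{u₁,u₂,u₃} to ω^{α·(u₃−β)} · Ψ_{u₁+α, u₂, u₃−β} (this is equation (13) of Theorem 1, with the global phase ω^{α·(u₃−β)} made explicit). -/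
/-- The generalized Pauli operator `U_{α,β}` applied to the third qudit:
`f(j₁,j₂,j₃) ↦ ω^{j₃·α} f(j₁, j₂, j₃+β)`. -/
noncomputable def pauliTrd (d : ℕ) (α β : ZMod d)
    (f : ZMod d × ZMod d × ZMod d → ℂ) : ZMod d × ZMod d × ZMod d → ℂ :=
  fun p => omega d ^ (p.2.2 * α).val * f (p.1, p.2.1, p.2.2 + β)

lemma omega_val_add (d : ℕ) [NeZero d] (a b : ZMod d) :
    omega d ^ a.val * omega d ^ b.val = omega d ^ ((a + b).val) := by
  rw [← pow_add, ZMod.val_add, ← omega_pow_mod d (NeZero.ne d)]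

/-- Equation (13) of Theorem 1, with the global phase `ω^{α·(u₃−β)}` made explicit:
`(I ⊗ I ⊗ U_{α,β}) Ψ_{u₁,u₂,u₃} = ω^{α·(u₃−β)} • Ψ_{u₁+α, u₂, u₃−β}`. -/
theorem pauliTrd_GHZ3 (d : ℕ) (hd : 2 ≤ d) (α β u₁ u₂ u₃ : ZMod d) :
    pauliTrd d α β (GHZ3 d u₁ u₂ u₃) =
      (omega d ^ (α * (u₃ - β)).val) • GHZ3 d (u₁ + α) u₂ (u₃ - β) := by
  have hdne : d ≠ 0 := by omega
  haveI : NeZero d := ⟨hdne⟩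
  funext p
  obtain ⟨j₁, j₂, j₃⟩ := p
  simp only [pauliTrd, GHZ3, Pi.smul_apply, smul_eq_mul]
  have hcond : (j₃ + β = j₁ + u₃) ↔ (j₃ = j₁ + (u₃ - β)) := by
    constructor <;> intro h
    · rw [← sub_eq_iff_eq_add'] at h ⊢; rw [← h]; ring
    · rw [h]; ring
  by_cases h2 : j₂ = j₁ + u₂
  · by_cases h3 : j₃ = j₁ + (u₃ - β)
    · rw [if_pos ⟨h2, hcond.mpr h3⟩, if_pos ⟨h2, h3⟩]
      have key : omega d ^ (j₃ * α).val * omega d ^ (j₁ * u₁).val =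
          omega d ^ (α * (u₃ - β)).val * omega d ^ (j₁ * (u₁ + α)).val := by
        rw [omega_val_add, omega_val_add]
        congr 1
        rw [h3]; ring_nf
      rw [mul_left_comm, key]; ring
    · rw [if_neg (fun hc => h3 (hcond.mp hc.2)), if_neg (fun hc => h3 hc.2)]
      ring
  · rw [if_neg (fun hc => h2 hc.1), if_neg (fun hc => h2 hc.1)]; ring
end

section
/- Failure of the entanglement-measurement attack: let d ≥ 2, ω = exp(2πi/d), H a complex vector space, and w : ZMod d → H (with w k = a_{kk}|e_{kk}⟩ the probe vector attached by the eavesdropper to basis state |k⟩). Suppose that for all j, m ∈ ZMod d with m ≠ j, Σ_{k ∈ ZMod d} ω^{k·(j−m)} • w k = 0 (the condition required for the attack to pass the X-basis eavesdropping check). Then for every j ∈ ZMod d the attacked Fourier-basis state is unentangled from the probe and the probe state is independent of j: in the tensor product (ZMod d → ℂ) ⊗[ℂ] H one has Σ_{k} ((1/√d)·ω^{k·j}) • (δ_k ⊗ w k) = (Σ_k (1/√d)·ω^{k·j} • δ_k) ⊗ w 0, i.e. U_E(|J_j⟩ ⊗ |E⟩) = |J_j⟩ ⊗ w 0, so the eavesdropper's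 probe carries the same state regardless of the transmitted particle. -/
/-!
Taking `j = 0` in the no-detection condition says that the discrete Fourier transform of the
probe map `w : ZMod d → H` vanishes away from `0`. By Fourier inversion `w` is then constant, so
`Σ_k c_k • (δ_k ⊗ w k) = (Σ_k c_k • δ_k) ⊗ w 0` for any coefficients `c_k`.
-/

open TensorProduct

namespace ZMod

lemma apply_eq_of_dft_eq_zero {N : ℕ} [NeZero N] {E : Type*} [AddCommGroup E] [Module ℂ E]
    {Φ : ZMod N → E} (h : ∀ k ≠ 0, 𝓕 Φ k = 0) (j j' : ZMod N) : Φ j = Φ j' := by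
  have inversion (i : ZMod N) : Φ i = (N : ℂ)⁻¹ • 𝓕 Φ 0 := by
    rw [← (𝓕).symm_apply_apply Φ, invDFT_apply, Finset.sum_eq_single 0
      (fun k _ hk ↦ by rw [h k hk, smul_zero]) (by simp)]
    simp [dft_apply_zero]
  rw [inversion j, inversion j']

end ZMod

lemma omega_pow_val_eq_stdAddChar (d : ℕ) [NeZero d] (k : ZMod d) : omega d ^ k.val = ZMod.stdAddChar k := by
  rw [ZMod.stdAddChar_apply, ZMod.toCircle_apply, omega, ← Complex.exp_nat_mul]
  ring_nf

theorem entanglement_attack_fails_general (d : ℕ) [NeZero d]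
    {H : Type*} [AddCommGroup H] [Module ℂ H] (w : ZMod d → H)
    (hw : ∀ j m : ZMod d, m ≠ j →
      ∑ k : ZMod d, (omega d ^ (k * (j - m)).val) • w k = 0) :
    ∀ j : ZMod d,
      ∑ k : ZMod d, ((1 / Real.sqrt d : ℂ) * omega d ^ (k * j).val) •
          ((Pi.single k 1 : ZMod d → ℂ) ⊗ₜ[ℂ] w k) =
        (∑ k : ZMod d, ((1 / Real.sqrt d : ℂ) * omega d ^ (k * j).val) •
            (Pi.single k 1 : ZMod d → ℂ)) ⊗ₜ[ℂ] w 0 := by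
  have dft_w (s : ZMod d) (hs : s ≠ 0) : ZMod.dft w s = 0 := by
    simpa [omega_pow_val_eq_stdAddChar, ZMod.dft_apply] using hw 0 s hs
  intro j
  rw [sum_tmul]
  refine Finset.sum_congr rfl fun k _ ↦ ?_
  rw [ZMod.apply_eq_of_dft_eq_zero dft_w k 0, smul_tmul']

/-- Failure of the entanglement-measurement attack: let `w k` be the eavesdropper's probe
vector attached to the basis state `δ_k = |k⟩`.  If the no-detection condition
`Σ_k ω^{k·(j−m)} • w k = 0` holds for all `m ≠ j` (so the attack passes the X-basis check),
then for every `j` the attacked Fourier-basis state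
`U_E(|J_j⟩ ⊗ |E⟩) = Σ_k (1/√d)·ω^{k·j} • (δ_k ⊗ w k)` is the unentangled state
`|J_j⟩ ⊗ w 0`: the probe carries the same state regardless of the transmitted particle. -/
theorem entanglement_attack_fails (d : ℕ) (hd : 2 ≤ d) [NeZero d]
    {H : Type*} [AddCommGroup H] [Module ℂ H] (w : ZMod d → H)
    (hw : ∀ j m : ZMod d, m ≠ j →
      ∑ k : ZMod d, (omega d ^ (k * (j - m)).val) • w k = 0) :
    ∀ j : ZMod d,
      ∑ k : ZMod d, ((1 / Real.sqrt d : ℂ) * omega d ^ (k * j).val) •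
          ((Pi.single k 1 : ZMod d → ℂ) ⊗ₜ[ℂ] w k) =
        (∑ k : ZMod d, ((1 / Real.sqrt d : ℂ) * omega d ^ (k * j).val) •
            (Pi.single k 1 : ZMod d → ℂ)) ⊗ₜ[ℂ] w 0 :=
  entanglement_attack_fails_general d w hw
end
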